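/- Let φ : ℝ^n → ℝ admit at least one convex minorant (a convex g₀ : ℝ^n → ℝ with g₀ ≤ φ everywhere), and suppose there is a constant C ≥ 0 such that φ(x+h) + φ(x−h) − 2φ(x) ≤ C‖h‖² for all x, h ∈ ℝ^n. Then the convex envelope φ_e is real-valued and satisfies the same bound: φ_e(x+h) + φ_e(x−h) − 2φ_e(x) ≤ C‖h‖² for all x, h ∈ ℝ^n. (This is the key envelope step, via translations, in the proof of C^{1,1}-regularity of the equilibrium metric.) -/
import Mathlib


open scoped RealInnerProductSpace

/-- The convex envelope of a function `φ : ℝⁿ → ℝ`: the pointwise supremum of all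
convex minorants of `φ`. -/
noncomputable def convEnv {n : ℕ} (φ : EuclideanSpace ℝ (Fin n) → ℝ)
    (v : EuclideanSpace ℝ (Fin n)) : ℝ :=
  sSup {y : ℝ | ∃ g : EuclideanSpace ℝ (Fin n) → ℝ,
    ConvexOn ℝ Set.univ g ∧ (∀ w, g w ≤ φ w) ∧ y = g v}

lemma convEnv_bddAbove {n : ℕ} (φ : EuclideanSpace ℝ (Fin n) → ℝ)
    (v : EuclideanSpace ℝ (Fin n)) :
    BddAbove {y : ℝ | ∃ g : EuclideanSpace ℝ (Fin n) → ℝ,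
      ConvexOn ℝ Set.univ g ∧ (∀ w, g w ≤ φ w) ∧ y = g v} := by
  refine ⟨φ v, ?_⟩
  rintro y ⟨g, _, hgle, rfl⟩
  exact hgle v

lemma le_convEnv {n : ℕ} (φ g : EuclideanSpace ℝ (Fin n) → ℝ)
    (hg : ConvexOn ℝ Set.univ g) (hgle : ∀ w, g w ≤ φ w)
    (v : EuclideanSpace ℝ (Fin n)) : g v ≤ convEnv φ v :=
  le_csSup (convEnv_bddAbove φ v) ⟨g, hg, hgle, rfl⟩

lemma convEnv_le {n : ℕ} (φ g₀ : EuclideanSpace ℝ (Fin n) → ℝ)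
    (hg₀ : ConvexOn ℝ Set.univ g₀) (hg₀le : ∀ w, g₀ w ≤ φ w)
    (v : EuclideanSpace ℝ (Fin n)) : convEnv φ v ≤ φ v := by
  refine csSup_le ?_ ?_
  · exact ⟨g₀ v, g₀, hg₀, hg₀le, rfl⟩
  · rintro y ⟨g, _, hgle, rfl⟩
    exact hgle v

lemma convEnv_convexOn {n : ℕ} (φ g₀ : EuclideanSpace ℝ (Fin n) → ℝ)
    (hg₀ : ConvexOn ℝ Set.univ g₀) (hg₀le : ∀ w, g₀ w ≤ φ w) :
    ConvexOn ℝ Set.univ (convEnv φ) := by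
  refine ⟨convex_univ, fun x _ y _ a b ha hb hab => ?_⟩
  refine csSup_le ?_ ?_
  · exact ⟨g₀ (a • x + b • y), g₀, hg₀, hg₀le, rfl⟩
  rintro z ⟨g, hg, hgle, rfl⟩
  calc g (a • x + b • y) ≤ a * g x + b * g y := by
        simpa [smul_eq_mul] using hg.2 (Set.mem_univ x) (Set.mem_univ y) ha hb hab
    _ ≤ a • convEnv φ x + b • convEnv φ y := by
        simp only [smul_eq_mul]
        gcongr <;> exact le_convEnv φ g hg hgle _

/-- if `φ : ℝⁿ → ℝ` admits a convex minorant and satisfies a uniform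
second-difference bound `φ(x+h) + φ(x−h) − 2φ(x) ≤ C‖h‖²`, then its convex envelope `φ_e`
is real-valued (it lies between the minorant and `φ`) and satisfies the same bound. -/
theorem convEnv_second_difference_bound (n : ℕ)
    (φ g₀ : EuclideanSpace ℝ (Fin n) → ℝ)
    (hg₀ : ConvexOn ℝ Set.univ g₀) (hg₀le : ∀ w, g₀ w ≤ φ w)
    (C : ℝ) (hC : 0 ≤ C)
    (hφ : ∀ x h : EuclideanSpace ℝ (Fin n),
      φ (x + h) + φ (x - h) - 2 * φ x ≤ C * ‖h‖ ^ 2) :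
    (∀ v, g₀ v ≤ convEnv φ v ∧ convEnv φ v ≤ φ v) ∧
    (∀ x h : EuclideanSpace ℝ (Fin n),
      convEnv φ (x + h) + convEnv φ (x - h) - 2 * convEnv φ x ≤ C * ‖h‖ ^ 2) := by
  have hconv := convEnv_convexOn φ g₀ hg₀ hg₀le
  have henvle := convEnv_le φ g₀ hg₀ hg₀le
  refine ⟨fun v => ⟨le_convEnv φ g₀ hg₀ hg₀le v, henvle v⟩, fun x h => ?_⟩
  set G : EuclideanSpace ℝ (Fin n) → ℝ :=
    fun z => (convEnv φ (z + h) + convEnv φ (z - h) - C * ‖h‖ ^ 2) / 2 with hG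
  have hGconv : ConvexOn ℝ Set.univ G := by
    refine ⟨convex_univ, fun u _ v _ a b ha hb hab => ?_⟩
    have e1 : a • u + b • v + h = a • (u + h) + b • (v + h) := by
      rw [smul_add, smul_add]
      have : a • h + b • h = h := by
        rw [← add_smul, hab, one_smul]
      conv_lhs => rw [← this]
      abel
    have e2 : a • u + b • v - h = a • (u - h) + b • (v - h) := by
      rw [smul_sub, smul_sub]
      have : a • h + b • h = h := by
        rw [← add_smul, hab, one_smul]
      conv_lhs => rw [← this]
      abel
    have h1 : convEnv φ (a • u + b • v + h) ≤
        a * convEnv φ (u + h) + b * convEnv φ (v + h) := by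
      rw [e1]
      simpa [smul_eq_mul] using hconv.2 (Set.mem_univ (u + h)) (Set.mem_univ (v + h)) ha hb hab
    have h2 : convEnv φ (a • u + b • v - h) ≤
        a * convEnv φ (u - h) + b * convEnv φ (v - h) := by
      rw [e2]
      simpa [smul_eq_mul] using hconv.2 (Set.mem_univ (u - h)) (Set.mem_univ (v - h)) ha hb hab
    simp only [hG, smul_eq_mul]
    have hK : a * (C * ‖h‖ ^ 2) + b * (C * ‖h‖ ^ 2) = C * ‖h‖ ^ 2 := by
      rw [← add_mul, hab, one_mul]
    linarith
  have hGle : ∀ w, G w ≤ φ w := by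
    intro w
    have := hφ w h
    have h1 := henvle (w + h)
    have h2 := henvle (w - h)
    simp only [hG]
    linarith
  have := le_convEnv φ G hGconv hGle x
  simp only [hG] at this
  linarith
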